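/- The set-indexed process X (having an almost surely unique additive extension to 𝒞(u)) is set-Markov if and only if for all B, B' ∈ 𝒜(u) with B ⊆ B', the σ-fields ℱ_B and σ(X_{B'}) are conditionally independent given σ(X_B). -/

import Mathlib

/-
Write `𝒢 ⟂ ℋ | 𝒦` for conditional independence. It is equivalent to
`P[1_h | 𝒢 ⊔ 𝒦] = P[1_h | 𝒦]` for all `h ∈ ℋ` (a Dynkin argument on the sets `g ∩ k`), and in
this form symmetry, decomposition, weak union and contraction follow from the tower property.

If the condition holds, `ℱ_B ⟂ σ(X_{A∪B}) | σ(X_B)` upgrades to `ℱ_B ⟂ σ(X_{A∪B}, X_B) | σ(X_B)`,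
and `X_{A∖B} = X_{A∪B} - X_B` is measurable for the latter. Conversely, write
`B' = B ∪ A₁ ∪ ⋯ ∪ Aₙ` and add the `Aᵢ` one at a time: for `U = B ∪ A₁ ∪ ⋯ ∪ Aₖ` and
`A = Aₖ₊₁` the set-Markov property gives `ℱ_U ⟂ σ(X_{A∖U}) | σ(X_U)`, induction gives
`ℱ_B ⟂ σ(X_U) | σ(X_B)`, and weak union plus contraction give
`ℱ_B ⟂ σ(X_U, X_{A∖U}) | σ(X_B)`, where `σ(X_U, X_{A∖U})` contains `σ(X_{A∪U})`.
Weak union needs `σ(X_B) ⊆ ℱ_B`, true only up to null sets: by inclusion–exclusion `X_B` is a.s.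
equal to an `ℱ_B`-measurable `Y`, and conditioning on `σ(X_B)` or on `σ(Y)` is the same.
-/

open MeasureTheory ProbabilityTheory Set
open scoped ENNReal

noncomputable section

namespace SetIndexedMarkov

variable {T : Type*} [TopologicalSpace T] {Ω : Type*} [mΩ : MeasurableSpace Ω]

/-- `𝒜(u)`: the collection of all finite unions of sets in `𝒜`. -/
def Au (𝒜 : Set (Set T)) : Set (Set T) :=
  {B | ∃ s : Finset (Set T), ↑s ⊆ 𝒜 ∧ s.Nonempty ∧ B = ⋃₀ ↑s}

/-- `𝒞`: the collection of all sets of the form `A \ B` with `A ∈ 𝒜`, `B ∈ 𝒜(u)`. -/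
def CC (𝒜 : Set (Set T)) : Set (Set T) :=
  {C | ∃ A ∈ 𝒜, ∃ B ∈ Au 𝒜, C = A \ B}

/-- `∅' := ⋂ {A ∈ 𝒜 : A ≠ ∅}`, the minimal set of `𝒜`. -/
def emptyPrime (𝒜 : Set (Set T)) : Set T := ⋂₀ {A ∈ 𝒜 | A ≠ ∅}

/-- The standing structural assumptions on the indexing collection `𝒜`: a semilattice of
closed subsets of the compact Hausdorff space `T`, containing `∅` and `T`, closed under
arbitrary (nonempty) intersections, and containing no two disjoint nonempty sets. -/
structure IsIndexing (𝒜 : Set (Set T)) : Prop where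
  closed : ∀ A ∈ 𝒜, IsClosed A
  empty_mem : ∅ ∈ 𝒜
  univ_mem : Set.univ ∈ 𝒜
  sInter_mem : ∀ S ⊆ 𝒜, S.Nonempty → ⋂₀ S ∈ 𝒜
  no_disjoint : ∀ A ∈ 𝒜, ∀ B ∈ 𝒜, A.Nonempty → B.Nonempty → (A ∩ B).Nonempty

/-- The σ-field generated by a real random variable. -/
def sigOf (f : Ω → ℝ) : MeasurableSpace Ω := MeasurableSpace.comap f inferInstance

/-- The minimal filtration `ℱ_B = σ(X_A : A ∈ 𝒜, A ⊆ B)`. -/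
def filt (𝒜 : Set (Set T)) (X : Set T → Ω → ℝ) (B : Set T) : MeasurableSpace Ω :=
  ⨆ A ∈ {A | A ∈ 𝒜 ∧ A ⊆ B}, sigOf (X A)

/-- `G` and `H` are conditionally independent given `K` (under `P`):
`E[1_G 1_H | K] = E[1_G | K] ⬝ E[1_H | K]` a.s. for all `G`-, `H`-measurable sets. -/
def CondIndepGiven (P : Measure Ω) (G H K : MeasurableSpace Ω) : Prop :=
  ∀ g h : Set Ω, MeasurableSet[G] g → MeasurableSet[H] h →
    (P[((g ∩ h).indicator fun _ => (1 : ℝ)) | K]) =ᵐ[P]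
      fun ω => (P[(g.indicator fun _ => (1 : ℝ)) | K]) ω *
        (P[(h.indicator fun _ => (1 : ℝ)) | K]) ω

/-- Every `X_B`, `B ∈ 𝒜(u)`, is a (measurable) random variable. -/
def MeasOnAu (𝒜 : Set (Set T)) (X : Set T → Ω → ℝ) : Prop :=
  ∀ B ∈ Au 𝒜, Measurable (X B)

/-- The process `X` (viewed on `𝒜(u)`) is almost surely finitely additive, i.e. it is the
(a.s. unique) additive extension of its restriction to `𝒜`: it vanishes a.s. at `∅` and is
a.s. modular on the lattice `𝒜(u)`. -/
def AddExtension (𝒜 : Set (Set T)) (P : Measure Ω) (X : Set T → Ω → ℝ) : Prop :=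
  (∀ᵐ ω ∂P, X ∅ ω = 0) ∧
    ∀ B ∈ Au 𝒜, ∀ B' ∈ Au 𝒜,
      ∀ᵐ ω ∂P, X (B ∪ B') ω + X (B ∩ B') ω = X B ω + X B' ω

/-- `X` is set-Markov: for all `A ∈ 𝒜`, `B ∈ 𝒜(u)`, `ℱ_B ⟂ σ(X_{A∖B}) | σ(X_B)`,
where `X_{A∖B} = X_{A∪B} - X_B`. -/
def SetMarkov (𝒜 : Set (Set T)) (P : Measure Ω) (X : Set T → Ω → ℝ) : Prop :=
  ∀ A ∈ 𝒜, ∀ B ∈ Au 𝒜,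
    CondIndepGiven P (filt 𝒜 X B) (sigOf fun ω => X (A ∪ B) ω - X B ω) (sigOf (X B))

/-- A flow: an increasing map `f : [0,a] → 𝒜(u)`. -/
def IsFlow (𝒜 : Set (Set T)) (a : ℝ) (f : ℝ → Set T) : Prop :=
  (∀ t ∈ Set.Icc (0 : ℝ) a, f t ∈ Au 𝒜) ∧
    ∀ s t : ℝ, 0 ≤ s → s ≤ t → t ≤ a → f s ⊆ f t

/-- A continuous flow. -/
def IsContinuousFlow (𝒜 : Set (Set T)) (a : ℝ) (f : ℝ → Set T) : Prop :=
  IsFlow 𝒜 a f ∧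
    (∀ t ∈ Set.Icc (0 : ℝ) a, ∀ u : ℕ → ℝ, (∀ n, u n ∈ Set.Icc t a) → Antitone u →
      Filter.Tendsto u Filter.atTop (nhds t) → f t = ⋂ n, f (u n)) ∧
    (∀ t ∈ Set.Icc (0 : ℝ) a, ∀ u : ℕ → ℝ, (∀ n, u n ∈ Set.Icc 0 t) → Monotone u →
      Filter.Tendsto u Filter.atTop (nhds t) → f t = closure (⋃ n, f (u n)))

/-- A simple flow: a continuous flow starting at `∅'` which is piecewise `𝒜`-valued. -/
def IsSimpleFlow (𝒜 : Set (Set T)) (a : ℝ) (f : ℝ → Set T) : Prop :=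
  IsContinuousFlow 𝒜 a f ∧ f 0 = emptyPrime 𝒜 ∧
    ∃ (n : ℕ) (t : ℕ → ℝ) (g : ℕ → ℝ → Set T),
      0 < n ∧ t 0 = 0 ∧ t n = a ∧ (∀ i < n, t i < t (i + 1)) ∧
      (∀ i < n, ∀ s ∈ Set.Icc (t i) (t (i + 1)), g (i + 1) s ∈ 𝒜) ∧
      (∀ i < n, ∀ s u : ℝ, t i ≤ s → s ≤ u → u ≤ t (i + 1) → g (i + 1) s ⊆ g (i + 1) u) ∧
      (∀ i < n, ∀ s ∈ Set.Icc (t i) (t (i + 1)),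
        f s = (⋃ j ∈ Finset.Icc 1 i, g j (t j)) ∪ g (i + 1) s)

/-- A finite sub-semilattice of `𝒜`: a finite nonempty subfamily closed under intersection. -/
def IsSubSemilattice (𝒜 : Set (Set T)) (L : Finset (Set T)) : Prop :=
  ↑L ⊆ 𝒜 ∧ L.Nonempty ∧ ∀ A ∈ L, ∀ B ∈ L, A ∩ B ∈ L

/-- A consistent ordering `{A₀ = ∅', A₁, …, Aₙ}` of the finite sub-semilattice `L`. -/
structure ConsistentOrdering (𝒜 : Set (Set T)) (L : Finset (Set T)) (n : ℕ)
    (A : ℕ → Set T) : Prop where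
  zero : A 0 = emptyPrime 𝒜
  first : A 1 = ⋂₀ ↑L
  mem : ∀ i, 1 ≤ i → i ≤ n → A i ∈ L
  inj : ∀ i j, 1 ≤ i → i ≤ n → 1 ≤ j → j ≤ n → A i = A j → i = j
  surj : ∀ B ∈ L, ∃ i, 1 ≤ i ∧ i ≤ n ∧ A i = B
  consistent : ∀ i, 1 ≤ i → i ≤ n → ∀ B ∈ L, B ⊆ A i → B ≠ A i → ∃ j < i, A j = B

/-- `⋃_{j=1}^{i} A_j`. -/
def Uu (A : ℕ → Set T) (i : ℕ) : Set T := ⋃ j ∈ Finset.Icc 1 i, A j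

/-- `⋃_{j=0}^{i} A_j`. -/
def U0 (A : ℕ → Set T) (i : ℕ) : Set T := ⋃ j ∈ Finset.range (i + 1), A j

/-- The left neighbourhood `C_j = A_j ∖ ⋃_{l=0}^{j-1} A_l`. -/
def leftNbhd (A : ℕ → Set T) (j : ℕ) : Set T := A j \ ⋃ l ∈ Finset.range j, A l

/-- A (set-indexed) transition system `𝒬 = (Q_{BB'})_{B ⊆ B'}`. -/
def IsTransitionSystem (𝒜 : Set (Set T)) (Q : Set T → Set T → Kernel ℝ ℝ) : Prop :=
  (∀ B ∈ Au 𝒜, ∀ B' ∈ Au 𝒜, B ⊆ B' → IsMarkovKernel (Q B B')) ∧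
    (∀ B ∈ Au 𝒜, ∀ x : ℝ, Q B B x = Measure.dirac x) ∧
    (∀ B ∈ Au 𝒜, ∀ B' ∈ Au 𝒜, ∀ B'' ∈ Au 𝒜, B ⊆ B' → B' ⊆ B'' →
      ∀ (x : ℝ) (Γ : Set ℝ), MeasurableSet Γ →
        Q B B'' x Γ = ∫⁻ y, Q B' B'' y Γ ∂(Q B B' x))

/-- `X` is `𝒬`-Markov: `P[X_{B'} ∈ Γ | ℱ_B] = Q_{BB'}(X_B; Γ)` a.s. -/
def QMarkov (𝒜 : Set (Set T)) (P : Measure Ω) (X : Set T → Ω → ℝ)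
    (Q : Set T → Set T → Kernel ℝ ℝ) : Prop :=
  ∀ B ∈ Au 𝒜, ∀ B' ∈ Au 𝒜, B ⊆ B' → ∀ Γ : Set ℝ, MeasurableSet Γ →
    (P[fun ω => Γ.indicator (fun _ => (1 : ℝ)) (X B' ω) | filt 𝒜 X B]) =ᵐ[P]
      fun ω => (Q B B' (X B ω) Γ).toReal

/-- Iterated integration of the coordinates `i+1, …, i+m` of a path, each coordinate `j+1`
being integrated with respect to the kernel `κ j` applied at the coordinate `j`. -/
def stepInt (κ : ℕ → Kernel ℝ ℝ) : ℕ → ℕ → ((ℕ → ℝ) → ℝ≥0∞) → (ℕ → ℝ) → ℝ≥0∞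
  | _, 0, f, x => f x
  | i, m + 1, f, x =>
      ∫⁻ y, stepInt κ (i + 1) m f (Function.update x (i + 1) y) ∂(κ i (x i))

/-- The iterated integral
`∫ … ∫ f(x₀,…,xₙ) κ_{n-1}(x_{n-1}; dxₙ) ⋯ κ_0(x₀; dx₁) μ(dx₀)`. -/
def kiter (μ : Measure ℝ) (κ : ℕ → Kernel ℝ ℝ) (n : ℕ) (f : (ℕ → ℝ) → ℝ≥0∞) : ℝ≥0∞ :=
  ∫⁻ x₀, stepInt κ 0 n f (fun _ => x₀) ∂μ

/-- The sequence of kernels `Q_{∅'A₁}, Q_{A₁, A₁∪A₂}, …, Q_{⋃_{j<n}A_j, ⋃_{j≤n}A_j}`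
attached to a consistent ordering `A` by a set-indexed transition system `Q`. -/
def kerSeq (Q : Set T → Set T → Kernel ℝ ℝ) (A : ℕ → Set T) (i : ℕ) : Kernel ℝ ℝ :=
  Q (if i = 0 then A 0 else Uu A i) (Uu A (i + 1))

/-- The integrand `1_{Γ₀}(y₀) 1_{Γ₁}(y₁) ∏_{i=2}^{n} 1_{Γ_i}(y_{π(i)} - y_{π(i)-1})`. -/
def PermIntegrand (Γ : ℕ → Set ℝ) (π : ℕ → ℕ) (n : ℕ) (y : ℕ → ℝ) : ℝ≥0∞ :=
  (Γ 0).indicator 1 (y 0) * (Γ 1).indicator 1 (y 1) *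
    ∏ i ∈ Finset.Icc 2 n, (Γ i).indicator 1 (y (π i) - y (π i - 1))

/-- Assumption 1: the finite dimensional distributions built from `𝒬` over the left
neighbourhoods of a finite sub-semilattice do not depend on the consistent ordering. -/
def Assumption1 (𝒜 : Set (Set T)) (Q : Set T → Set T → Kernel ℝ ℝ) (μ : Measure ℝ) : Prop :=
  ∀ (L : Finset (Set T)) (n : ℕ) (A A' : ℕ → Set T) (π : Equiv.Perm ℕ),
    IsSubSemilattice 𝒜 L → ConsistentOrdering 𝒜 L n A → ConsistentOrdering 𝒜 L n A' →
    π 1 = 1 → (∀ i, ¬(1 ≤ i ∧ i ≤ n) → π i = i) →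
    (∀ i, 1 ≤ i → i ≤ n → A i = A' (π i)) →
    ∀ Γ : ℕ → Set ℝ, (∀ i, MeasurableSet (Γ i)) →
      kiter μ (kerSeq Q A) n (PermIntegrand Γ id n) =
        kiter μ (kerSeq Q A') n (PermIntegrand Γ π n)

/-- `X` has independent increments. -/
def IndepIncrements (𝒜 : Set (Set T)) (P : Measure Ω) (X : Set T → Ω → ℝ) : Prop :=
  ∀ (n : ℕ) (A B : ℕ → Set T),
    (∀ i < n, A i ∈ 𝒜) → (∀ i < n, B i ∈ Au 𝒜) →
    (∀ i < n, ∀ j < n, i ≠ j → Disjoint (A i \ B i) (A j \ B j)) →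
    iIndepFun
      (fun i : Fin n => fun ω => X (A i ∪ B i) ω - X (B i) ω) P

/-- The trace `X^f` of `X` along the flow `f` is Markov with the one-dimensional
transition system `Qf`. -/
def QMarkovFlow (𝒜 : Set (Set T)) (P : Measure Ω) (X : Set T → Ω → ℝ)
    (a : ℝ) (f : ℝ → Set T) (Qf : ℝ → ℝ → Kernel ℝ ℝ) : Prop :=
  ∀ s t : ℝ, 0 ≤ s → s < t → t ≤ a → ∀ Γ : Set ℝ, MeasurableSet Γ →
    (P[fun ω => Γ.indicator (fun _ => (1 : ℝ)) (X (f t) ω) | filt 𝒜 X (f s)]) =ᵐ[P]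
      fun ω => (Qf s t (X (f s) ω) Γ).toReal

/-- A one-dimensional transition system on the time interval `[0,a]`. -/
def IsFlowTransition (a : ℝ) (Q : ℝ → ℝ → Kernel ℝ ℝ) : Prop :=
  (∀ s t : ℝ, 0 ≤ s → s < t → t ≤ a → IsMarkovKernel (Q s t)) ∧
    ∀ s t u : ℝ, 0 ≤ s → s < t → t < u → u ≤ a →
      ∀ (x : ℝ) (Γ : Set ℝ), MeasurableSet Γ →
        Q s u x Γ = ∫⁻ y, Q t u y Γ ∂(Q s t x)

/-- The simple flow `f` connects the sets of a finite sub-semilattice in the sense of the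
consistent ordering `A`, with partition `t` of `[0,a]`. -/
def Connects (𝒜 : Set (Set T)) (n : ℕ) (A : ℕ → Set T) (a : ℝ) (t : ℕ → ℝ)
    (f : ℝ → Set T) : Prop :=
  t 0 = 0 ∧ t n = a ∧ (∀ i < n, t i < t (i + 1)) ∧
    (∀ i ≤ n, f (t i) = Uu A i) ∧
    ∃ g : ℕ → ℝ → Set T,
      (∀ i < n, ∀ s ∈ Set.Icc (t i) (t (i + 1)), g (i + 1) s ∈ 𝒜) ∧
      (∀ i < n, ∀ s u : ℝ, t i ≤ s → s ≤ u → u ≤ t (i + 1) → g (i + 1) s ⊆ g (i + 1) u) ∧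
      (∀ i < n, g (i + 1) (t i) = A i ∧ g (i + 1) (t (i + 1)) = A (i + 1)) ∧
      (∀ i < n, ∀ s ∈ Set.Icc (t i) (t (i + 1)),
        f s = (⋃ j ∈ Finset.Icc 1 i, A j) ∪ g (i + 1) s)

/-- `ℱ_{∂B} = σ(X_A : A ∈ 𝒜, A ⊆ B, A ⊄ B°)`. -/
def filtBoundary (𝒜 : Set (Set T)) (X : Set T → Ω → ℝ) (B : Set T) : MeasurableSpace Ω :=
  ⨆ A ∈ {A | A ∈ 𝒜 ∧ A ⊆ B ∧ ¬ A ⊆ interior B}, sigOf (X A)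

/-- `ℱ_{B^c} = σ(X_A : A ∈ 𝒜, A ⊄ B)`. -/
def filtComp (𝒜 : Set (Set T)) (X : Set T → Ω → ℝ) (B : Set T) : MeasurableSpace Ω :=
  ⨆ A ∈ {A | A ∈ 𝒜 ∧ ¬ A ⊆ B}, sigOf (X A)

/-- The initial distribution of `X`: the law of `X_{∅'}`. -/
def InitialLaw (P : Measure Ω) (X : Set T → Ω → ℝ) (𝒜 : Set (Set T)) : Measure ℝ :=
  P.map (X (emptyPrime 𝒜))

/-- The measure `Q_{BB'}(x; ·) = F_{B'∖B}(· - x)`, i.e. the law of `X_{B'} - X_B + x`. -/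
def incLaw (P : Measure Ω) (X : Set T → Ω → ℝ) (B B' : Set T) (x : ℝ) : Measure ℝ :=
  P.map fun ω => X B' ω - X B ω + x

end SetIndexedMarkov

local notation:max "𝟏" s:max => Set.indicator s fun _ => (1 : ℝ)

theorem isPiSystem_image2_inter {Ω : Type*} (m₁ m₂ : MeasurableSpace Ω) :
    IsPiSystem (image2 (· ∩ ·) {s | MeasurableSet[m₁] s} {t | MeasurableSet[m₂] t}) := by
  rintro _ ⟨s₁, hs₁, t₁, ht₁, rfl⟩ _ ⟨s₂, hs₂, t₂, ht₂, rfl⟩ -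
  exact ⟨s₁ ∩ s₂, hs₁.inter hs₂, t₁ ∩ t₂, ht₁.inter ht₂, inter_inter_inter_comm _ _ _ _⟩

theorem generateFrom_image2_inter {Ω : Type*} (m₁ m₂ : MeasurableSpace Ω) :
    MeasurableSpace.generateFrom
      (image2 (· ∩ ·) {s | MeasurableSet[m₁] s} {t | MeasurableSet[m₂] t}) = m₁ ⊔ m₂ := by
  refine le_antisymm (MeasurableSpace.generateFrom_le ?_) (sup_le (fun s hs => ?_) fun t ht => ?_)
  · rintro _ ⟨s, hs, t, ht, rfl⟩
    exact (le_sup_left (b := m₂) _ hs).inter (le_sup_right (a := m₁) _ ht)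
  · exact MeasurableSpace.measurableSet_generateFrom ⟨s, hs, univ, .univ, inter_univ s⟩
  · exact MeasurableSpace.measurableSet_generateFrom ⟨univ, .univ, t, ht, univ_inter t⟩

theorem setIntegral_eq_of_isPiSystem {Ω : Type*} [mΩ : MeasurableSpace Ω] {μ : Measure Ω}
    {m : MeasurableSpace Ω} {C : Set (Set Ω)} (hgen : m = MeasurableSpace.generateFrom C)
    (hC : IsPiSystem C) (hm : m ≤ mΩ) {f g : Ω → ℝ} (hf : Integrable f μ) (hg : Integrable g μ)
    (huniv : ∫ ω, f ω ∂μ = ∫ ω, g ω ∂μ) (hbasic : ∀ s ∈ C, ∫ ω in s, f ω ∂μ = ∫ ω in s, g ω ∂μ)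
    {s : Set Ω} (hs : MeasurableSet[m] s) : ∫ ω in s, f ω ∂μ = ∫ ω in s, g ω ∂μ := by
  induction s, hs using MeasurableSpace.induction_on_inter hgen hC with
  | empty => simp
  | basic t ht => exact hbasic t ht
  | compl t ht iht =>
    have hf' := integral_add_compl (hm _ ht) hf
    have hg' := integral_add_compl (hm _ ht) hg
    linarith
  | iUnion t hdisj ht iht =>
    rw [integral_iUnion (fun i => hm _ (ht i)) hdisj hf.integrableOn,
      integral_iUnion (fun i => hm _ (ht i)) hdisj hg.integrableOn]
    exact tsum_congr iht

theorem indicator_eq_mul_indicator_one {α : Type*} (s : Set α) (f : α → ℝ) :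
    s.indicator f = f * 𝟏 s := by
  ext x
  by_cases hx : x ∈ s <;> simp [hx]

theorem ae_norm_condExp_indicator_one_le {Ω : Type*} {m : MeasurableSpace Ω} [MeasurableSpace Ω]
    {μ : Measure Ω} (s : Set Ω) : ∀ᵐ ω ∂μ, ‖μ[𝟏 s | m] ω‖ ≤ 1 := by
  refine ae_bdd_abs_condExp_of_ae_bdd_abs (ae_of_all _ fun ω => ?_)
  by_cases hω : ω ∈ s <;> simp [hω]

namespace SetIndexedMarkov

section CondIndepGiven

variable {Ω : Type*} {G G' H H' K K' : MeasurableSpace Ω} [mΩ : MeasurableSpace Ω] {P : Measure Ω}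

theorem CondIndepGiven.symm (h : CondIndepGiven P G H K) : CondIndepGiven P H G K :=
  fun a b ha hb => by
    filter_upwards [h b a hb ha] with ω hω
    rw [inter_comm, hω, mul_comm]

theorem CondIndepGiven.mono_right (hH : H' ≤ H) (h : CondIndepGiven P G H K) :
    CondIndepGiven P G H' K :=
  fun g h' hg hh' => h g h' hg (hH _ hh')

theorem CondIndepGiven.mono_left (hG : G' ≤ G) (h : CondIndepGiven P G H K) :
    CondIndepGiven P G' H K :=
  (h.symm.mono_right hG).symm

theorem condIndepGiven_congr_cond (hKK' : ∀ f : Ω → ℝ, P[f|K] =ᵐ[P] P[f|K']) :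
    CondIndepGiven P G H K ↔ CondIndepGiven P G H K' := by
  constructor <;> intro hc g h hg hh <;>
    filter_upwards [hc g h hg hh, hKK' (𝟏 (g ∩ h)), hKK' (𝟏 g), hKK' (𝟏 h)] with ω h₀ h₁ h₂ h₃
  · rw [← h₁, ← h₂, ← h₃, h₀]
  · rw [h₁, h₂, h₃, h₀]

variable [IsFiniteMeasure P]

theorem condIndepGiven_iff_condExp_sup (hG : G ≤ mΩ) (hH : H ≤ mΩ) (hK : K ≤ mΩ) :
    CondIndepGiven P G H K ↔ ∀ h, MeasurableSet[H] h → P[𝟏 h | G ⊔ K] =ᵐ[P] P[𝟏 h | K] := by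
  have hint : ∀ s, MeasurableSet s → Integrable (𝟏 s) P :=
    fun s hs => (integrable_const 1).indicator hs
  constructor
  · intro hcig h hh
    refine (ae_eq_condExp_of_forall_setIntegral_eq (sup_le hG hK) (hint h (hH h hh))
      (fun s _ _ => integrable_condExp.integrableOn) (fun s hs _ => ?_)
      ((stronglyMeasurable_condExp (m := K) (μ := P)).mono
        (le_sup_right (a := G))).aestronglyMeasurable).symm
    refine setIntegral_eq_of_isPiSystem (generateFrom_image2_inter G K).symm
      (isPiSystem_image2_inter G K) (sup_le hG hK) integrable_condExp (hint h (hH h hh))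
      (integral_condExp hK) ?_ hs
    rintro _ ⟨g, hg, k, hk, rfl⟩
    have hpull : P[P[𝟏 h | K] * 𝟏 g | K] =ᵐ[P] P[𝟏 h | K] * P[𝟏 g | K] :=
      condExp_stronglyMeasurable_mul_of_bound hK stronglyMeasurable_condExp (hint g (hG g hg)) 1
        (ae_norm_condExp_indicator_one_le h)
    calc ∫ ω in g ∩ k, P[𝟏 h | K] ω ∂P
        = ∫ ω in k, P[P[𝟏 h | K] * 𝟏 g | K] ω ∂P := by
          have hint' : Integrable (P[𝟏 h | K] * 𝟏 g) P := by
            rw [← indicator_eq_mul_indicator_one]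
            exact integrable_condExp.indicator (hG _ hg)
          rw [setIntegral_condExp hK hint' hk, inter_comm,
            ← setIntegral_indicator (hG _ hg), indicator_eq_mul_indicator_one]
      _ = ∫ ω in k, P[𝟏 (g ∩ h) | K] ω ∂P := by
          refine integral_congr_ae (ae_restrict_of_ae ?_)
          filter_upwards [hpull, hcig g h hg hh] with ω h₁ h₂
          rw [h₁, h₂, Pi.mul_apply, mul_comm]
      _ = ∫ ω in g ∩ k, 𝟏 h ω ∂P := by
          rw [setIntegral_condExp hK (hint _ ((hG _ hg).inter (hH _ hh))) hk, ← indicator_indicator,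
            setIntegral_indicator (hG _ hg), inter_comm]
  · intro hsup g h hg hh
    calc P[𝟏 (g ∩ h) | K]
        =ᵐ[P] P[P[𝟏 (g ∩ h) | G ⊔ K] | K] :=
          (condExp_condExp_of_le le_sup_right (sup_le hG hK)).symm
      _ =ᵐ[P] P[P[𝟏 h | K] * 𝟏 g | K] := by
          refine condExp_congr_ae ?_
          rw [← indicator_indicator]
          filter_upwards [condExp_indicator (m := G ⊔ K) (hint h (hH h hh))
            (le_sup_left (b := K) _ hg), hsup h hh] with ω h₁ h₂
          rw [h₁, indicator_eq_mul_indicator_one, Pi.mul_apply, Pi.mul_apply, h₂]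
      _ =ᵐ[P] P[𝟏 h | K] * P[𝟏 g | K] :=
          condExp_stronglyMeasurable_mul_of_bound hK stronglyMeasurable_condExp (hint g (hG g hg)) 1
            (ae_norm_condExp_indicator_one_le h)
      _ = fun ω => P[𝟏 g | K] ω * P[𝟏 h | K] ω :=
          funext fun ω => mul_comm _ _

theorem CondIndepGiven.sup_cond (hG : G ≤ mΩ) (hH : H ≤ mΩ) (hK : K ≤ mΩ)
    (h : CondIndepGiven P G H K) : CondIndepGiven P G (H ⊔ K) K := by
  refine ((condIndepGiven_iff_condExp_sup (sup_le hH hK) hG hK).2 fun g hg => ?_).symm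
  rw [sup_assoc, sup_idem]
  exact (condIndepGiven_iff_condExp_sup hH hG hK).1 h.symm g hg

theorem condIndepGiven_self (hG : G ≤ mΩ) (hK : K ≤ mΩ) : CondIndepGiven P G K K :=
  ((condIndepGiven_iff_condExp_sup hK hG hK).2 fun _ _ => by rw [sup_idem]).symm

theorem CondIndepGiven.weakUnion (hG : G ≤ mΩ) (hH : H ≤ mΩ) (hK : K ≤ mΩ) (hK'G : K' ≤ G)
    (h : CondIndepGiven P G H K) : CondIndepGiven P G H (K ⊔ K') := by
  have hKK' : K ⊔ K' ≤ mΩ := sup_le hK (hK'G.trans hG)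
  rw [condIndepGiven_iff_condExp_sup hG hH hKK']
  intro s hs
  have hs' := (condIndepGiven_iff_condExp_sup hG hH hK).1 h s hs
  rw [sup_comm K K', ← sup_assoc, sup_eq_left.2 hK'G, sup_comm K' K]
  calc P[𝟏 s | G ⊔ K]
      =ᵐ[P] P[𝟏 s | K] := hs'
    _ = P[P[𝟏 s | K] | K ⊔ K'] :=
        (condExp_of_stronglyMeasurable hKK' (stronglyMeasurable_condExp.mono le_sup_left)
          integrable_condExp).symm
    _ =ᵐ[P] P[P[𝟏 s | G ⊔ K] | K ⊔ K'] := condExp_congr_ae hs'.symm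
    _ =ᵐ[P] P[𝟏 s | K ⊔ K'] :=
        condExp_condExp_of_le (sup_le le_sup_right (hK'G.trans le_sup_left)) (sup_le hG hK)

theorem CondIndepGiven.contraction (hG : G ≤ mΩ) (hH : H ≤ mΩ) (hK : K ≤ mΩ) (hK' : K' ≤ mΩ)
    (h₁ : CondIndepGiven P G K' K) (h₂ : CondIndepGiven P G H (K ⊔ K')) :
    CondIndepGiven P G (K' ⊔ H) K := by
  refine ((condIndepGiven_iff_condExp_sup (sup_le hK' hH) hG hK).2 fun g hg => ?_).symm
  have e₁ := (condIndepGiven_iff_condExp_sup hK' hG hK).1 h₁.symm g hg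
  have e₂ := (condIndepGiven_iff_condExp_sup hH hG (sup_le hK hK')).1 h₂.symm g hg
  rw [sup_comm K K'] at e₂
  rw [sup_comm K' H, sup_assoc]
  exact e₂.trans e₁

end CondIndepGiven

section RandomVariables

theorem sigOf_add_le {Ω : Type*} (f g : Ω → ℝ) : sigOf (f + g) ≤ sigOf f ⊔ sigOf g :=
  (((comap_measurable f).mono le_sup_left le_rfl).add
    ((comap_measurable g).mono le_sup_right le_rfl)).comap_le

theorem sigOf_sub_le {Ω : Type*} (f g : Ω → ℝ) : sigOf (f - g) ≤ sigOf f ⊔ sigOf g :=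
  (((comap_measurable f).mono le_sup_left le_rfl).sub
    ((comap_measurable g).mono le_sup_right le_rfl)).comap_le

variable {Ω : Type*} {G G' H K' : MeasurableSpace Ω} [mΩ : MeasurableSpace Ω] {P : Measure Ω}
  [IsFiniteMeasure P]

theorem condExp_sigOf_ae_eq_of_ae_eq {Z Y : Ω → ℝ} (hZ : Measurable Z) (hY : Measurable Y)
    (hZY : Z =ᵐ[P] Y) (f : Ω → ℝ) : P[f | sigOf Z] =ᵐ[P] P[f | sigOf Y] := by
  by_cases hf : Integrable f P
  swap
  · simp [condExp_of_not_integrable hf]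
  obtain ⟨F, hF, hFZ⟩ : ∃ F : ℝ → ℝ, Measurable F ∧ P[f | sigOf Z] = F ∘ Z :=
    stronglyMeasurable_condExp.measurable.exists_eq_measurable_comp
  have hFY : F ∘ Z =ᵐ[P] F ∘ Y := hZY.fun_comp F
  have hint : Integrable (F ∘ Y) P := (hFZ ▸ integrable_condExp).congr hFY
  rw [hFZ]
  refine hFY.trans (ae_eq_condExp_of_forall_setIntegral_eq hY.comap_le hf
    (fun s _ _ => hint.integrableOn) (fun s hs _ => ?_)
    (hF.comp (comap_measurable Y)).aestronglyMeasurable)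
  obtain ⟨S, hS, rfl⟩ := hs
  calc ∫ ω in Y ⁻¹' S, (F ∘ Y) ω ∂P = ∫ ω in Z ⁻¹' S, (F ∘ Z) ω ∂P := by
        rw [setIntegral_congr_set (hZY.preimage S).symm]
        exact integral_congr_ae (ae_restrict_of_ae hFY.symm)
    _ = ∫ ω in Z ⁻¹' S, f ω ∂P := by
        rw [← hFZ]
        have hm : sigOf Z ≤ mΩ := hZ.comap_le
        exact setIntegral_condExp hm hf ⟨S, hS, rfl⟩
    _ = ∫ ω in Y ⁻¹' S, f ω ∂P := setIntegral_congr_set (hZY.preimage S)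

/-- With `σ(Z)` replaced by `σ(Y) ≤ G`, this is weak union followed by contraction. -/
theorem CondIndepGiven.chain {Z Y : Ω → ℝ} (hG' : G' ≤ mΩ) (hGG' : G ≤ G') (hH : H ≤ mΩ)
    (hK' : K' ≤ mΩ) (hZ : Measurable Z) (hY : Measurable[G] Y) (hZY : Z =ᵐ[P] Y)
    (hprev : CondIndepGiven P G K' (sigOf Z)) (hstep : CondIndepGiven P G' H K') :
    CondIndepGiven P G (K' ⊔ H) (sigOf Z) := by
  have hG : G ≤ mΩ := hGG'.trans hG'
  have hYG : sigOf Y ≤ G := hY.comap_le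
  rw [condIndepGiven_congr_cond (condExp_sigOf_ae_eq_of_ae_eq hZ (hY.mono hG le_rfl) hZY)]
    at hprev ⊢
  refine hprev.contraction hG hH (hYG.trans hG) hK' ?_
  rw [sup_comm]
  exact (hstep.weakUnion hG' hH hK' (hYG.trans hGG')).mono_left hGG'

end RandomVariables

section IndexingCollection

variable {T : Type*} {𝒜 : Set (Set T)} {A B C : Set T}

theorem mem_Au_of_mem (hA : A ∈ 𝒜) : A ∈ Au 𝒜 :=
  ⟨{A}, by simpa using hA, Finset.singleton_nonempty A, by simp⟩

theorem union_mem_Au (hB : B ∈ Au 𝒜) (hC : C ∈ Au 𝒜) : B ∪ C ∈ Au 𝒜 := by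
  classical
  obtain ⟨s, hs, hsne, rfl⟩ := hB
  obtain ⟨t, ht, -, rfl⟩ := hC
  exact ⟨s ∪ t, by simpa using union_subset hs ht, hsne.mono Finset.subset_union_left,
    by rw [Finset.coe_union, sUnion_union]⟩

theorem biUnion_mem_Au (hempty : ∅ ∈ 𝒜) {ι : Type*} (s : Finset ι) {A : ι → Set T}
    (hA : ∀ i ∈ s, A i ∈ 𝒜) : ⋃ i ∈ s, A i ∈ Au 𝒜 := by
  classical
  induction s using Finset.induction_on with
  | empty => simpa using mem_Au_of_mem hempty
  | insert a s _ ih =>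
    rw [Finset.set_biUnion_insert]
    exact union_mem_Au (mem_Au_of_mem (hA a (Finset.mem_insert_self a s)))
      (ih fun i hi => hA i (Finset.mem_insert_of_mem hi))

theorem exists_finset_of_mem_Au (hB : B ∈ Au 𝒜) :
    ∃ s : Finset (Set T), (∀ A ∈ s, A ∈ 𝒜) ∧ B = ⋃ A ∈ s, A := by
  obtain ⟨s, hs, -, rfl⟩ := hB
  exact ⟨s, fun A hA => hs hA, by simp [sUnion_eq_biUnion]⟩

variable {Ω : Type*} {X : Set T → Ω → ℝ}

theorem sigOf_le_filt (hA : A ∈ 𝒜) (hAB : A ⊆ B) : sigOf (X A) ≤ filt 𝒜 X B :=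
  le_iSup₂ (f := fun A (_ : A ∈ {A | A ∈ 𝒜 ∧ A ⊆ B}) => sigOf (X A)) A ⟨hA, hAB⟩

theorem filt_mono (h : B ⊆ C) : filt 𝒜 X B ≤ filt 𝒜 X C :=
  iSup₂_le fun _ hA => sigOf_le_filt hA.1 (hA.2.trans h)

theorem filt_le [mΩ : MeasurableSpace Ω] (hmeas : MeasOnAu 𝒜 X) (B : Set T) : filt 𝒜 X B ≤ mΩ :=
  iSup₂_le fun A hA => (hmeas A (mem_Au_of_mem hA.1)).comap_le

end IndexingCollection

variable {T : Type*} [TopologicalSpace T] {Ω : Type*} [mΩ : MeasurableSpace Ω]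

section SetIndexedProcess

variable {𝒜 : Set (Set T)} {A B : Set T} {P : Measure Ω} {X : Set T → Ω → ℝ}

theorem IsIndexing.inter_mem (h𝒜 : IsIndexing 𝒜) (hA : A ∈ 𝒜) (hB : B ∈ 𝒜) : A ∩ B ∈ 𝒜 := by
  simpa using h𝒜.sInter_mem {A, B} (pair_subset hA hB) (insert_nonempty _ _)

/-- Inclusion–exclusion `X_{A ∪ V} = X_A + X_V - X_{A ∩ V}`, with `A ∩ V` again a union of
as many sets of `𝒜`. -/
theorem AddExtension.exists_measurable_filt_ae_eq_biUnion (h𝒜 : IsIndexing 𝒜)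
    (hadd : AddExtension 𝒜 P X) {ι : Type*} (s : Finset ι) {A : ι → Set T}
    (hA : ∀ i ∈ s, A i ∈ 𝒜) :
    ∃ Y : Ω → ℝ, Measurable[filt 𝒜 X (⋃ i ∈ s, A i)] Y ∧ X (⋃ i ∈ s, A i) =ᵐ[P] Y := by
  classical
  induction s using Finset.induction_on generalizing A with
  | empty => simpa using ⟨0, measurable_const, hadd.1⟩
  | insert a s _ ih =>
    have ha : A a ∈ 𝒜 := hA a (Finset.mem_insert_self a s)
    have hs : ∀ i ∈ s, A i ∈ 𝒜 := fun i hi => hA i (Finset.mem_insert_of_mem hi)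
    obtain ⟨Y₁, hY₁, hXY₁⟩ := ih hs
    obtain ⟨Y₂, hY₂, hXY₂⟩ :=
      ih (A := fun i => A a ∩ A i) fun i hi => h𝒜.inter_mem ha (hs i hi)
    rw [Finset.set_biUnion_insert]
    refine ⟨fun ω => X (A a) ω + Y₁ ω - Y₂ ω, ?_, ?_⟩
    · refine (((comap_measurable (X (A a))).mono (sigOf_le_filt ha subset_union_left) le_rfl).add
        (hY₁.mono (filt_mono subset_union_right) le_rfl)).sub
        (hY₂.mono (filt_mono ?_) le_rfl)
      exact iUnion₂_subset fun i _ => inter_subset_left.trans subset_union_left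
    · filter_upwards [hadd.2 (A a) (mem_Au_of_mem ha) _ (biUnion_mem_Au h𝒜.empty_mem s hs),
        hXY₁, hXY₂] with ω hmod h₁ h₂
      rw [inter_iUnion₂] at hmod
      linarith

theorem AddExtension.exists_measurable_filt_ae_eq (h𝒜 : IsIndexing 𝒜)
    (hadd : AddExtension 𝒜 P X) (hB : B ∈ Au 𝒜) :
    ∃ Y : Ω → ℝ, Measurable[filt 𝒜 X B] Y ∧ X B =ᵐ[P] Y := by
  obtain ⟨s, hs, rfl⟩ := exists_finset_of_mem_Au hB
  exact hadd.exists_measurable_filt_ae_eq_biUnion h𝒜 s hs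

theorem SetMarkov.condIndepGiven_union_biUnion [IsFiniteMeasure P] (hSM : SetMarkov 𝒜 P X)
    (h𝒜 : IsIndexing 𝒜) (hmeas : MeasOnAu 𝒜 X) (hadd : AddExtension 𝒜 P X) (hB : B ∈ Au 𝒜)
    (s : Finset (Set T)) (hs : ∀ A ∈ s, A ∈ 𝒜) :
    CondIndepGiven P (filt 𝒜 X B) (sigOf (X (B ∪ ⋃ A ∈ s, A))) (sigOf (X B)) := by
  classical
  obtain ⟨Y, hY, hXY⟩ := hadd.exists_measurable_filt_ae_eq h𝒜 hB
  induction s using Finset.induction_on with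
  | empty =>
    simpa using condIndepGiven_self (K := sigOf (X B)) (filt_le hmeas B) (hmeas B hB).comap_le
  | insert a s _ ih =>
    have ha : a ∈ 𝒜 := hs a (Finset.mem_insert_self a s)
    have hs' : ∀ A ∈ s, A ∈ 𝒜 := fun A hA => hs A (Finset.mem_insert_of_mem hA)
    set U := B ∪ ⋃ A ∈ s, A
    have hU : U ∈ Au 𝒜 := union_mem_Au hB (biUnion_mem_Au h𝒜.empty_mem s hs')
    have haU : a ∪ U ∈ Au 𝒜 := union_mem_Au (mem_Au_of_mem ha) hU
    have hchain := (ih hs').chain (filt_le hmeas U) (filt_mono subset_union_left)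
      ((hmeas _ haU).sub (hmeas U hU)).comap_le (hmeas U hU).comap_le (hmeas B hB) hY hXY
      (hSM a ha U hU)
    rw [Finset.set_biUnion_insert, union_left_comm]
    refine hchain.mono_right ?_
    calc sigOf (X (a ∪ U)) = sigOf (X U + fun ω => X (a ∪ U) ω - X U ω) := by
          congr 1; ext ω; simp
      _ ≤ _ := sigOf_add_le _ _

end SetIndexedProcess

theorem statement3_general {T : Type*} [TopologicalSpace T]
    {Ω : Type*} [mΩ : MeasurableSpace Ω] (P : Measure Ω) [IsProbabilityMeasure P]
    (𝒜 : Set (Set T)) (h𝒜 : IsIndexing 𝒜)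
    (X : Set T → Ω → ℝ) (hmeas : MeasOnAu 𝒜 X) (hadd : AddExtension 𝒜 P X) :
    SetMarkov 𝒜 P X ↔
      ∀ B ∈ Au 𝒜, ∀ B' ∈ Au 𝒜, B ⊆ B' →
        CondIndepGiven P (filt 𝒜 X B) (sigOf (X B')) (sigOf (X B)) := by
  constructor
  · intro hSM B hB B' hB' hBB'
    obtain ⟨s, hs, rfl⟩ := exists_finset_of_mem_Au hB'
    simpa [union_eq_right.2 hBB'] using hSM.condIndepGiven_union_biUnion h𝒜 hmeas hadd hB s hs
  · intro h A hA B hB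
    have hAB : A ∪ B ∈ Au 𝒜 := union_mem_Au (mem_Au_of_mem hA) hB
    exact ((h B hB _ hAB subset_union_right).sup_cond (filt_le hmeas B) (hmeas _ hAB).comap_le
      (hmeas B hB).comap_le).mono_right (sigOf_sub_le _ _)

/-- Proposition 1: `X` is set-Markov iff for all `B ⊆ B'` in `𝒜(u)`,
`ℱ_B ⟂ σ(X_{B'}) | σ(X_B)`. -/
theorem statement3 {T : Type*} [TopologicalSpace T] [CompactSpace T] [T2Space T]
    {Ω : Type*} [mΩ : MeasurableSpace Ω] (P : Measure Ω) [IsProbabilityMeasure P]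
    (𝒜 : Set (Set T)) (h𝒜 : IsIndexing 𝒜)
    (X : Set T → Ω → ℝ) (hmeas : MeasOnAu 𝒜 X) (hadd : AddExtension 𝒜 P X) :
    SetMarkov 𝒜 P X ↔
      ∀ B ∈ Au 𝒜, ∀ B' ∈ Au 𝒜, B ⊆ B' →
        CondIndepGiven P (filt 𝒜 X B) (sigOf (X B')) (sigOf (X B)) :=
  statement3_general (mΩ := mΩ) P 𝒜 h𝒜 X hmeas hadd

end SetIndexedMarkov
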